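/- arXiv:2005.09568 — 2 statements merged into one kernel-verified Lean document; each statement's English description precedes it below -/
import Mathlib

section
/- Let (M³, g) be a Riemannian 3-manifold with volume form μ, and let X be a vector field satisfying curl X = f X for a strictly positive function f (a rotational Beltrami field), with X nowhere vanishing. Then the 1-form α = ι_X g satisfies α ∧ dα > 0, i.e. α is a contact form. -/
/-!
For `n + 1` vectors `v` in a free module of rank `n` and an alternating `n`-form `μ`,
`∑ⱼ (-1)ʲ μ(v without vⱼ) • vⱼ = 0`: in coordinates this is the Laplace expansion of a
determinant with a repeated row. Applying `α = ι_X g` to the case `(X, u, v, w)` gives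
`α ∧ ι_X μ = α(X) μ = g(X,X) μ`, so `dα = f ι_X μ` yields `α ∧ dα = f g(X,X) μ` with
`f g(X,X) > 0`.
-/

/-- We work in a chart `ℝ³` of a Riemannian 3-manifold `(M,g)`. -/
abbrev V3 := Fin 3 → ℝ

/-- The exterior derivative of a 1-form `α` on `ℝ³`, evaluated on constant vector
fields `u, v`: `dα_x(u,v) = ∂_u (α(v)) − ∂_v (α(u))`. -/
noncomputable def extDer (α : V3 → V3 → ℝ) (x u v : V3) : ℝ :=
  fderiv ℝ (fun y => α y v) x u - fderiv ℝ (fun y => α y u) x v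

/-- The wedge product of a 1-form with a 2-form on a 3-dimensional space. -/
def wedge12 (α : V3 → V3 → ℝ) (β : V3 → V3 → V3 → ℝ) (x u v w : V3) : ℝ :=
  α x u * β x v w - α x v * β x u w + α x w * β x u v

theorem Module.Basis.sum_neg_one_pow_det_succAbove_smul {R M : Type*} [CommRing R]
    [AddCommGroup M] [Module R M] {n : ℕ} (e : Module.Basis (Fin n) R M) (v : Fin (n + 1) → M) :
    ∑ j : Fin (n + 1), ((-1) ^ (j : ℕ) * e.det (v ∘ j.succAbove)) • v j = 0 := by
  refine e.repr.injective (Finsupp.ext fun i => ?_)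
  let A : Matrix (Fin (n + 1)) (Fin (n + 1)) R :=
    Matrix.of (Fin.cons (fun j => e.repr (v j) i) fun k j => e.repr (v j) k)
  have hminor (j : Fin (n + 1)) :
      A.submatrix Fin.succ j.succAbove = e.toMatrix (v ∘ j.succAbove) := rfl
  have hA : A.det = 0 := Matrix.det_zero_of_row_eq (Fin.succ_ne_zero i).symm rfl
  rw [Matrix.det_succ_row_zero] at hA
  simpa [hminor, Finsupp.finsetSum_apply, Module.Basis.det_apply, mul_right_comm, A] using hA

theorem AlternatingMap.sum_neg_one_pow_succAbove_smul {R M : Type*} [CommRing R]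
    [AddCommGroup M] [Module R M] {n : ℕ} (e : Module.Basis (Fin n) R M)
    (μ : M [⋀^Fin n]→ₗ[R] R) (v : Fin (n + 1) → M) :
    ∑ j : Fin (n + 1), ((-1) ^ (j : ℕ) * μ (v ∘ j.succAbove)) • v j = 0 := by
  have h := congrArg (μ e • ·) (e.sum_neg_one_pow_det_succAbove_smul v)
  rw [μ.eq_smul_basis_det e]
  simpa [Finset.smul_sum, smul_smul, mul_left_comm] using h

theorem AlternatingMap.linearMap_wedge_interior_fin_three {R M : Type*} [CommRing R]
    [AddCommGroup M] [Module R M] (e : Module.Basis (Fin 3) R M) (μ : M [⋀^Fin 3]→ₗ[R] R)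
    (α : M →ₗ[R] R) (X u v w : M) :
    α u * μ ![X, v, w] - α v * μ ![X, u, w] + α w * μ ![X, u, v] = α X * μ ![u, v, w] := by
  have h := congrArg α (μ.sum_neg_one_pow_succAbove_smul e ![X, u, v, w])
  have minor : ∀ j : Fin 4, ![X, u, v, w] ∘ j.succAbove =
      ![![u, v, w], ![X, v, w], ![X, u, w], ![X, u, v]] j := fun j => by
    funext i; fin_cases j <;> fin_cases i <;> rfl
  simp only [minor, Fin.sum_univ_succ, Fin.sum_univ_zero, Fin.val_succ, Fin.val_zero,
    Matrix.cons_val_zero, Matrix.cons_val_succ, map_add, map_smul, smul_eq_mul] at h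
  linear_combination -h

theorem stmt5_general
    (g : V3 → V3 →ₗ[ℝ] V3 →ₗ[ℝ] ℝ)
    (μ : V3 → AlternatingMap ℝ V3 ℝ (Fin 3))
    (X : V3 → V3) (f : V3 → ℝ)
    (hg : ∀ x v, v ≠ 0 → 0 < g x v v)
    (hX : ∀ x, X x ≠ 0) (hf : ∀ x, 0 < f x)
    (hBeltrami : ∀ x u v,
      extDer (fun y w => g y (X y) w) x u v = f x * μ x ![X x, u, v]) :
    ∀ x u v w,
      wedge12 (fun y w => g y (X y) w)
          (extDer (fun y w => g y (X y) w)) x u v w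
        = (f x * g x (X x) (X x)) * μ x ![u, v, w]
      ∧ 0 < f x * g x (X x) (X x) := by
  intro x u v w
  refine ⟨?_, mul_pos (hf x) (hg x (X x) (hX x))⟩
  rw [wedge12, hBeltrami, hBeltrami, hBeltrami]
  linear_combination f x *
    (μ x).linearMap_wedge_interior_fin_three (Pi.basisFun ℝ (Fin 3)) (g x (X x)) (X x) u v w

/-- Let `(M³,g)` be a Riemannian 3-manifold with volume form `μ`, and `X` a nowhere
vanishing rotational Beltrami field: `curl X = f X` with `f > 0`, where `curl X` is
defined by `ι_{curl X} μ = d(ι_X g)`, i.e. `dα = f ι_X μ` for `α = ι_X g`.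
Then `α ∧ dα = f · g(X,X) · μ` is a positive multiple of the volume form, i.e.
`α ∧ dα > 0`: `α` is a contact form. -/
theorem stmt5
    (g : V3 → V3 →ₗ[ℝ] V3 →ₗ[ℝ] ℝ)
    (μ : V3 → AlternatingMap ℝ V3 ℝ (Fin 3))
    (X : V3 → V3) (f : V3 → ℝ)
    (hg : ∀ x v, v ≠ 0 → 0 < g x v v)
    (hgsymm : ∀ x u v, g x u v = g x v u)
    (hμ : ∀ x, μ x ≠ 0)
    (hX : ∀ x, X x ≠ 0) (hf : ∀ x, 0 < f x)
    (hBeltrami : ∀ x u v,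
      extDer (fun y w => g y (X y) w) x u v = f x * μ x ![X x, u, v]) :
    ∀ x u v w,
      wedge12 (fun y w => g y (X y) w)
          (extDer (fun y w => g y (X y) w)) x u v w
        = (f x * g x (X x) (X x)) * μ x ![u, v, w]
      ∧ 0 < f x * g x (X x) (X x) :=
  stmt5_general g μ X f hg hX hf hBeltrami
end

section
/- Let α = u dz/z + β be a b-contact form on a 3-manifold M with critical surface Z, where u ∈ C^∞(M), β ∈ Ω¹(M). If R is the Reeb vector field (ι_R dα = 0, α(R) = 1), then along Z the vector field R is tangent to Z and satisfies ι_R(u dβ + β ∧ du)|_Z = du|_Z; i.e. R|_Z is the Hamiltonian vector field of u with respect to the 2-form Θ = (u dβ + β ∧ du)|_Z. -/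
/-!
We work in a tubular-neighbourhood chart `ℝ³` of the 3-manifold `M` around the
critical surface `Z`, with coordinates `p = (z, a, b)` and `Z = {z = 0}`.
A b-vector field is recorded by its components `R = (R₀, R₁, R₂)` in the b-frame
`(z ∂/∂z, ∂/∂a, ∂/∂b)`; as an ordinary vector field it is `(z·R₀, R₁, R₂)`.
The b-contact form is `α = u dz/z + β` with `u` a smooth function and `β` an
ordinary smooth 1-form; then `dα = du ∧ dz/z + dβ`.
-/

/-- Ordinary vector field underlying the b-vector field with b-components `R`. -/
def bVec (R : ℝ × ℝ × ℝ → ℝ × ℝ × ℝ) (p : ℝ × ℝ × ℝ) : ℝ × ℝ × ℝ :=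
  (p.1 * (R p).1, (R p).2.1, (R p).2.2)

/-- Exterior derivative of an ordinary 1-form on `ℝ³`, on constant vector fields. -/
noncomputable def dOneForm (β : ℝ × ℝ × ℝ → ℝ × ℝ × ℝ → ℝ) (p v w : ℝ × ℝ × ℝ) : ℝ :=
  fderiv ℝ (fun y => β y w) p v - fderiv ℝ (fun y => β y v) p w

/-- Let `α = u dz/z + β` be a b-contact form on a 3-manifold with critical surface
`Z = {z = 0}` and let `R` be its Reeb vector field, a b-vector field determined by
`α(R) = 1` and `ι_R dα = 0` (the latter tested against all b-vector fields
`(z·w₀, w₁, w₂)`, using `dα = du ∧ dz/z + dβ` and `(dz/z)(z∂/∂z) = 1`).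
Then along `Z` the field `R` is tangent to `Z` (its `∂/∂z`-component `z·R₀`
vanishes), and `ι_R Θ = du` on `Z`, where `Θ = u dβ + β ∧ du`: `R|_Z` is the
Hamiltonian vector field of `u` with respect to `Θ|_Z`. -/
theorem stmt18
    (u : ℝ × ℝ × ℝ → ℝ) (hu : ContDiff ℝ (⊤ : ℕ∞) u)
    (β : ℝ × ℝ × ℝ → ℝ × ℝ × ℝ → ℝ)
    (hβlin : ∀ p, IsLinearMap ℝ (β p))
    (hβsmooth : ∀ w, ContDiff ℝ (⊤ : ℕ∞) fun y => β y w)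
    (R : ℝ × ℝ × ℝ → ℝ × ℝ × ℝ)
    -- α(R) = 1 :
    (hαR : ∀ p, u p * (R p).1 + β p (bVec R p) = 1)
    -- ι_R dα = 0 as a b-form :
    (hRdα : ∀ (p : ℝ × ℝ × ℝ) (w₀ w₁ w₂ : ℝ),
      fderiv ℝ u p (bVec R p) * w₀
        - fderiv ℝ u p (p.1 * w₀, w₁, w₂) * (R p).1
        + dOneForm β p (bVec R p) (p.1 * w₀, w₁, w₂) = 0) :
    ∀ p : ℝ × ℝ × ℝ, p.1 = 0 →
      (bVec R p).1 = 0
      ∧ ∀ v : ℝ × ℝ × ℝ, v.1 = 0 →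
          u p * dOneForm β p (bVec R p) v
            + β p (bVec R p) * fderiv ℝ u p v
            - β p v * fderiv ℝ u p (bVec R p)
          = fderiv ℝ u p v := by
  intro p hp
  have h0 : (bVec R p).1 = 0 := by simp [bVec, hp]
  refine ⟨h0, ?_⟩
  rintro ⟨v1, v2, v3⟩ hv
  simp only at hv
  subst hv
  -- derivative of u along R vanishes at p
  have hzero : ((0 : ℝ), (0 : ℝ), (0 : ℝ)) = (0 : ℝ × ℝ × ℝ) := rfl
  have hd0 : ∀ X : ℝ × ℝ × ℝ, dOneForm β p X ((0:ℝ), (0:ℝ), (0:ℝ)) = 0 := by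
    intro X
    have hc : (fun y => β y ((0:ℝ), (0:ℝ), (0:ℝ))) = fun _ => (0:ℝ) := by
      funext y
      rw [hzero, (hβlin y).map_zero]
    unfold dOneForm
    rw [hc, hzero]
    simp
  have hdu0 : fderiv ℝ u p (bVec R p) = 0 := by
    have h := hRdα p 1 0 0
    rw [hp] at h
    rw [zero_mul] at h
    rw [hd0] at h
    simp at h
    rw [hzero, map_zero, zero_mul, sub_zero] at h
    exact h
  have h1 := hRdα p 0 v2 v3
  rw [hp] at h1
  simp only [zero_mul, hdu0, zero_sub] at h1
  -- h1 : -(fderiv ℝ u p (0, v2, v3) * (R p).1) + dOneForm β p (bVec R p) (0, v2, v3) = 0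
  have h2 := hαR p
  -- β p (bVec R p) = 1 - u p * (R p).1
  rw [hdu0]
  linear_combination u p * h1 + (fderiv ℝ u p (0, v2, v3)) * h2
end
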